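/- arXiv:1205.7051 — 4 statements merged into one kernel-verified Lean document; each statement's English description precedes it below -/
import Mathlib

section
/- For all integers n, k with 1 ≤ k ≤ n, the Bernoulli numbers satisfy the identity Σ_{i=0}^{⌊(k-1)/2⌋} C(2k-2i-1,k) · C(2n+1,2i+1) · B_{2n-2i} = (-1)^k · 2^{2k-2n-1} · Σ_{i=0}^{n-k} C(n-i,k) · C(2n+1,2i) · (2^{2i} − 2) · B_{2i}, where C(a,b) denotes the binomial coefficient and 2^{2i}−2 = 2(2^{2i-1}−1). -/
/-!
Write `β = X coth (X / 2) = 2 X / (e^X - 1) + X`, whose coefficients are `2 B_m / m!`, and let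
`θ_k` be the reverse Bessel polynomial, of degree `k`. The three-term recurrences of `θ_k` and of
`H_k = 2^k k! ∑_j C(j, k) X^(2j+1) / (2j+1)!` give the Padé-type identity
`e^(-X) θ_k(X) - e^X θ_k(-X) = (-1)^(k+1) 2 H_k`.
Dividing it by `e^X - e^(-X)` and using `β(2X) (e^X - e^(-X)) = 2X (e^X + e^(-X))` and
`(β(2X) - 2β(X)) (e^X - e^(-X)) = -4X` yields
`β(2X) (θ_k(X) - θ_k(-X)) = 2X (θ_k(X) + θ_k(-X)) + 2 (-1)^k (β(2X) - 2β(X)) H_k`.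
The polynomial term has degree at most `k + 1 < 2n + 1`; comparing the coefficients of
`X^(2n+1)` of the two remaining products gives the identity.
-/

open PowerSeries Finset Nat

namespace PowerSeries

variable {A : Type*} [CommRing A]

theorem coeff_evalNegHom (f : A⟦X⟧) (m : ℕ) : coeff m (evalNegHom f) = (-1) ^ m * coeff m f :=
  coeff_rescale f (-1) m

theorem evalNegHom_C (c : A) : evalNegHom (C c) = C c := by
  ext m
  rw [coeff_evalNegHom, coeff_C]
  split_ifs with h <;> simp [h]

theorem rescale_two_exp [Algebra ℚ A] : rescale (2 : A) (exp A) = exp A * exp A := by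
  rw [← one_add_one_eq_two, ← exp_mul_exp_eq_exp_add, rescale_one]; rfl

theorem coeff_two_mul_add_one_mul {R : Type*} [Semiring R] {f g : R⟦X⟧}
    (hg : ∀ j, coeff (2 * j) g = 0) (n : ℕ) :
    coeff (2 * n + 1) (f * g)
      = ∑ i ∈ range (n + 1), coeff (2 * n - 2 * i) f * coeff (2 * i + 1) g := by
  rw [coeff_mul, ← sum_image (f := fun p => coeff p.1 f * coeff p.2 g)
    (g := fun i => (2 * n - 2 * i, 2 * i + 1))
    (fun _ _ _ _ hab => by simp only [Prod.mk.injEq] at hab; omega)]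
  symm
  apply sum_subset
  · intro p hp
    simp only [mem_image, mem_range] at hp
    obtain ⟨i, hi, rfl⟩ := hp
    rw [HasAntidiagonal.mem_antidiagonal]
    omega
  · intro p hp hpi
    rw [HasAntidiagonal.mem_antidiagonal] at hp
    obtain ⟨j, hj | hj⟩ := Nat.even_or_odd' p.2
    · rw [hj, hg, mul_zero]
    · refine absurd (mem_image.mpr ⟨j, mem_range.mpr (by omega), ?_⟩) hpi
      ext <;> simp only <;> omega

end PowerSeries

lemma coeff_exp_rat (m : ℕ) : coeff m (exp ℚ) = 1 / m ! := by simp [coeff_exp]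

lemma exp_sub_exp_neg_ne_zero : exp ℚ - evalNegHom (exp ℚ) ≠ 0 := by
  intro h
  simpa [evalNegHom, coeff_rescale] using congrArg (coeff 1) h

/-- `X coth (X / 2) = 2 X / (e^X - 1) + X`. -/
noncomputable def xCothHalf : ℚ⟦X⟧ := 2 * bernoulliPowerSeries ℚ + X

lemma coeff_xCothHalf {m : ℕ} (hm : m ≠ 1) : coeff m xCothHalf = 2 * bernoulli m / m ! := by
  simp [xCothHalf, bernoulliPowerSeries, coeff_X, hm, two_mul]
  ring

lemma xCothHalf_mul_exp_sub_one : xCothHalf * (exp ℚ - 1) = X * (exp ℚ + 1) := by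
  rw [xCothHalf]
  linear_combination 2 * bernoulliPowerSeries_mul_exp_sub_one ℚ

lemma rescale_two_xCothHalf_mul_exp_sub_exp_neg :
    rescale 2 xCothHalf * (exp ℚ - evalNegHom (exp ℚ))
      = 2 * X * (exp ℚ + evalNegHom (exp ℚ)) := by
  apply mul_left_cancel₀ (isUnit_exp ℚ).ne_zero
  have h := congrArg (rescale (2 : ℚ)) xCothHalf_mul_exp_sub_one
  simp only [map_mul, map_sub, map_add, map_one, rescale_X, rescale_two_exp, map_ofNat] at h
  linear_combination h - (rescale 2 xCothHalf + 2 * X) * exp_mul_exp_neg_eq_one (A := ℚ)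

lemma rescale_two_xCothHalf_sub_two_mul_mul_exp_sub_exp_neg :
    (rescale 2 xCothHalf - 2 * xCothHalf) * (exp ℚ - evalNegHom (exp ℚ)) = -(4 * X) := by
  linear_combination rescale_two_xCothHalf_mul_exp_sub_exp_neg
    - 2 * (1 + evalNegHom (exp ℚ)) * xCothHalf_mul_exp_sub_one
    + 2 * (xCothHalf - X) * exp_mul_exp_neg_eq_one (A := ℚ)

noncomputable def reverseBessel (k : ℕ) : ℚ⟦X⟧ :=
  mk fun m => if m ≤ k then ((2 * k - m)! : ℚ) / (2 ^ (k - m) * (k - m)! * m !) else 0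

lemma coeff_reverseBessel {k m r : ℕ} (h : k = m + r) :
    coeff m (reverseBessel k) = ((m + 2 * r)! : ℚ) / (2 ^ r * r ! * m !) := by
  rw [reverseBessel, coeff_mk, if_pos (by omega), show 2 * k - m = m + 2 * r by omega,
    show k - m = r by omega]

lemma coeff_reverseBessel_of_lt {k m : ℕ} (h : k < m) : coeff m (reverseBessel k) = 0 := by
  rw [reverseBessel, coeff_mk, if_neg (by omega)]

lemma reverseBessel_zero : reverseBessel 0 = 1 := by
  ext m
  rcases m with _ | m
  · rw [coeff_reverseBessel (r := 0) rfl]; simp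
  · rw [coeff_reverseBessel_of_lt (by omega), coeff_one, if_neg (by omega)]

lemma reverseBessel_one : reverseBessel 1 = 1 + X := by
  ext m
  rw [map_add, coeff_one, coeff_X]
  rcases m with _ | _ | m
  · rw [coeff_reverseBessel (r := 1) rfl]; norm_num
  · rw [coeff_reverseBessel (r := 0) rfl]; norm_num
  · rw [coeff_reverseBessel_of_lt (by omega), if_neg (by omega), if_neg (by omega)]; simp

lemma reverseBessel_add_two (k : ℕ) :
    reverseBessel (k + 2)
      = C (2 * k + 3 : ℚ) * reverseBessel (k + 1) + X ^ 2 * reverseBessel k := by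
  ext m
  rw [map_add, coeff_C_mul, coeff_X_pow_mul']
  rcases m with _ | _ | p
  · rw [coeff_reverseBessel (r := k + 2) (by omega), coeff_reverseBessel (r := k + 1) (by omega),
      if_neg (by omega)]
    simp only [factorial_succ, show 0 + 2 * (k + 2) = 2 * k + 4 by ring,
      show 0 + 2 * (k + 1) = 2 * k + 2 by ring]
    push_cast
    field_simp
    ring
  · rw [coeff_reverseBessel (r := k + 1) (by omega), coeff_reverseBessel (r := k) (by omega),
      if_neg (by omega)]
    simp only [factorial_succ, show 0 + 1 + 2 * (k + 1) = 2 * k + 3 by ring,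
      show 0 + 1 + 2 * k = 2 * k + 1 by ring]
    push_cast
    field_simp
    ring
  · rw [if_pos (by omega), show p + 2 - 2 = p by omega]
    rcases Nat.lt_or_ge (k + 1) (p + 2) with hlt | hle
    · rw [coeff_reverseBessel_of_lt hlt, mul_zero, zero_add]
      rcases Nat.lt_or_ge (k + 2) (p + 2) with hlt' | hle'
      · rw [coeff_reverseBessel_of_lt hlt', coeff_reverseBessel_of_lt (by omega)]
      · rw [coeff_reverseBessel (r := 0) (by omega), coeff_reverseBessel (r := 0) (by omega)]
        simp only [mul_zero, add_zero, pow_zero, factorial_zero, cast_one, one_mul]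
        rw [div_self (by positivity), div_self (by positivity)]
    · obtain ⟨s, rfl⟩ : ∃ s, k = p + 1 + s := ⟨k - (p + 1), by omega⟩
      rw [coeff_reverseBessel (r := s + 1) (by omega), coeff_reverseBessel (r := s) (by omega),
        coeff_reverseBessel (r := s + 1) (by omega)]
      simp only [factorial_succ, show p + 2 + 2 * (s + 1) = p + 2 * s + 4 by ring,
        show p + 2 + 2 * s = p + 2 * s + 2 by ring, show p + 2 * (s + 1) = p + 2 * s + 2 by ring]
      push_cast
      field_simp
      ring

noncomputable def padeRemainder (k : ℕ) : ℚ⟦X⟧ :=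
  mk fun m => if Even m then 0 else 2 ^ k * ((m / 2).descFactorial k : ℚ) / m !

lemma coeff_padeRemainder_two_mul (k j : ℕ) : coeff (2 * j) (padeRemainder k) = 0 := by
  simp [padeRemainder]

lemma coeff_padeRemainder_two_mul_add_one (k j : ℕ) :
    coeff (2 * j + 1) (padeRemainder k) = 2 ^ k * (j.descFactorial k : ℚ) / (2 * j + 1)! := by
  simp [padeRemainder, show (2 * j + 1) / 2 = j by omega]

lemma succ_descFactorial_recurrence (i k : ℕ) :
    2 * (i + 1).descFactorial (k + 2) + (2 * k + 3) * (i + 1).descFactorial (k + 1)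
      = (i + 1) * (2 * i + 3) * i.descFactorial k := by
  rw [succ_descFactorial_succ, succ_descFactorial_succ, descFactorial_succ]
  rcases Nat.lt_or_ge i k with h | h
  · simp [descFactorial_eq_zero_iff_lt.mpr h]
  · obtain ⟨t, rfl⟩ : ∃ t, i = k + t := ⟨i - k, by omega⟩
    rw [Nat.add_sub_cancel_left]
    ring

lemma padeRemainder_add_two (k : ℕ) :
    padeRemainder (k + 2)
      = X ^ 2 * padeRemainder k - C (2 * k + 3 : ℚ) * padeRemainder (k + 1) := by
  ext m
  rw [map_sub, coeff_C_mul, coeff_X_pow_mul']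
  obtain ⟨j, rfl | rfl⟩ := Nat.even_or_odd' m
  · rcases j with _ | i
    · simp only [coeff_padeRemainder_two_mul]
      simp
    · rw [if_pos (by omega), show 2 * (i + 1) - 2 = 2 * i by omega]
      simp [coeff_padeRemainder_two_mul]
  · rcases j with _ | i
    · simp only [coeff_padeRemainder_two_mul_add_one]
      simp
    · rw [if_pos (by omega), show 2 * (i + 1) + 1 - 2 = 2 * i + 1 by omega,
        coeff_padeRemainder_two_mul_add_one, coeff_padeRemainder_two_mul_add_one,
        coeff_padeRemainder_two_mul_add_one]
      have h : 2 * ((i + 1).descFactorial (k + 2) : ℚ)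
          + (2 * k + 3) * (i + 1).descFactorial (k + 1)
          = (i + 1) * (2 * i + 3) * i.descFactorial k := by
        exact_mod_cast succ_descFactorial_recurrence i k
      simp only [show 2 * (i + 1) + 1 = (2 * i + 1) + 2 by ring, factorial_succ]
      push_cast
      field_simp
      linear_combination (2 : ℚ) ^ k * 2 * h

lemma two_mul_padeRemainder_zero :
    2 * padeRemainder 0 = exp ℚ - evalNegHom (exp ℚ) := by
  ext m
  rw [show (2 : ℚ⟦X⟧) = C 2 from (map_ofNat C 2).symm, coeff_C_mul, map_sub, coeff_evalNegHom,
    coeff_exp_rat]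
  obtain ⟨j, rfl | rfl⟩ := Nat.even_or_odd' m
  · rw [coeff_padeRemainder_two_mul, pow_mul]; norm_num
  · rw [coeff_padeRemainder_two_mul_add_one, pow_succ, pow_mul]; norm_num; ring

lemma two_mul_padeRemainder_one :
    2 * padeRemainder 1
      = X * (exp ℚ + evalNegHom (exp ℚ)) - (exp ℚ - evalNegHom (exp ℚ)) := by
  ext m
  rw [show (2 : ℚ⟦X⟧) = C 2 from (map_ofNat C 2).symm, coeff_C_mul, map_sub, map_sub,
    coeff_evalNegHom, coeff_exp_rat]
  rcases m with _ | m
  · simp [padeRemainder]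
  rw [coeff_succ_X_mul, map_add, coeff_evalNegHom, coeff_exp_rat]
  obtain ⟨j, rfl | rfl⟩ := Nat.even_or_odd' m
  · rw [coeff_padeRemainder_two_mul_add_one, descFactorial_one, factorial_succ]
    simp only [pow_succ, pow_mul]
    push_cast
    field_simp
    ring
  · rw [show 2 * j + 1 + 1 = 2 * (j + 1) by ring, coeff_padeRemainder_two_mul, pow_mul, pow_succ,
      pow_mul]
    norm_num

lemma evalNegHom_exp_mul_reverseBessel_sub :
    ∀ k, evalNegHom (exp ℚ) * reverseBessel k - exp ℚ * evalNegHom (reverseBessel k)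
      = (-1) ^ (k + 1) * 2 * padeRemainder k
  | 0 => by
    rw [reverseBessel_zero, map_one]
    linear_combination two_mul_padeRemainder_zero
  | 1 => by
    rw [reverseBessel_one, map_add, map_one, evalNegHom_X]
    linear_combination -two_mul_padeRemainder_one
  | k + 2 => by
    have ih₀ := evalNegHom_exp_mul_reverseBessel_sub k
    have ih₁ := evalNegHom_exp_mul_reverseBessel_sub (k + 1)
    rw [reverseBessel_add_two, padeRemainder_add_two]
    -- keeps `simp` from splitting `C (2 * k + 3)`
    generalize (2 * k + 3 : ℚ) = c
    simp only [map_add, map_mul, map_pow, evalNegHom_X, evalNegHom_C, neg_sq]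
    linear_combination C c * ih₁ + X ^ 2 * ih₀

lemma rescale_two_xCothHalf_mul_reverseBessel_sub (k : ℕ) :
    rescale 2 xCothHalf * (reverseBessel k - evalNegHom (reverseBessel k))
      = 2 * X * (reverseBessel k + evalNegHom (reverseBessel k))
        + C ((-1) ^ k * 2) * ((rescale 2 xCothHalf - 2 * xCothHalf) * padeRemainder k) := by
  apply mul_right_cancel₀ exp_sub_exp_neg_ne_zero
  simp only [map_mul, map_pow, map_neg, map_one, map_ofNat]
  linear_combination
    (reverseBessel k - evalNegHom (reverseBessel k)) * rescale_two_xCothHalf_mul_exp_sub_exp_neg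
    - (-1) ^ k * 2 * padeRemainder k * rescale_two_xCothHalf_sub_two_mul_mul_exp_sub_exp_neg
    + 4 * X * evalNegHom_exp_mul_reverseBessel_sub k

lemma coeff_rescale_two_xCothHalf_mul_reverseBessel_sub {n k : ℕ} (hkn : k ≤ n) :
    coeff (2 * n + 1) (rescale 2 xCothHalf * (reverseBessel k - evalNegHom (reverseBessel k)))
      = 2 ^ (2 * n + 3) * k ! / (2 ^ k * (2 * n + 1)!) *
        ∑ i ∈ range ((k + 1) / 2), (Nat.choose (2 * k - 2 * i - 1) k : ℚ)
          * (Nat.choose (2 * n + 1) (2 * i + 1)) * bernoulli (2 * n - 2 * i) := by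
  have hodd (j : ℕ) : coeff (2 * j) (reverseBessel k - evalNegHom (reverseBessel k)) = 0 := by
    rw [map_sub, coeff_evalNegHom, pow_mul]
    norm_num
  rw [coeff_two_mul_add_one_mul hodd, mul_sum]
  symm
  apply sum_subset_zero_on_sdiff (range_subset_range.mpr (by omega))
  · intro i hi
    simp only [mem_sdiff, mem_range] at hi
    rw [map_sub, coeff_evalNegHom, coeff_reverseBessel_of_lt (by omega)]
    simp
  · intro i hi
    rw [mem_range] at hi
    obtain ⟨r, rfl⟩ : ∃ r, k = 2 * i + 1 + r := ⟨k - (2 * i + 1), by omega⟩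
    obtain ⟨d, rfl⟩ : ∃ d, n = i + d := ⟨n - i, by omega⟩
    rw [map_sub, coeff_evalNegHom, coeff_reverseBessel rfl, coeff_rescale,
      show 2 * (i + d) - 2 * i = 2 * d by omega, coeff_xCothHalf (by omega),
      show 2 * (2 * i + 1 + r) - 2 * i - 1 = (2 * i + 1 + r) + r by omega,
      cast_choose ℚ (show 2 * i + 1 ≤ 2 * (i + d) + 1 by omega),
      cast_choose ℚ (show 2 * i + 1 + r ≤ 2 * i + 1 + r + r by omega),
      show 2 * (i + d) + 1 - (2 * i + 1) = 2 * d by omega, Nat.add_sub_cancel_left,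
      show 2 * i + 1 + 2 * r = 2 * i + 1 + r + r by ring]
    simp only [pow_succ, pow_mul, pow_add]
    field_simp
    ring

lemma coeff_rescale_two_xCothHalf_sub_two_mul_mul_padeRemainder (n k : ℕ) :
    coeff (2 * n + 1) ((rescale 2 xCothHalf - 2 * xCothHalf) * padeRemainder k)
      = 2 ^ (k + 1) * k ! / (2 * n + 1)! *
        ∑ i ∈ range (n - k + 1), (Nat.choose (n - i) k : ℚ) * (Nat.choose (2 * n + 1) (2 * i))
          * (2 ^ (2 * i) - 2) * bernoulli (2 * i) := by
  rw [coeff_two_mul_add_one_mul (coeff_padeRemainder_two_mul k),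
    sum_subset (range_subset_range.mpr (by omega : n - k + 1 ≤ n + 1)), ← sum_range_reflect,
    mul_sum]
  · refine sum_congr rfl fun j hj => ?_
    rw [mem_range] at hj
    obtain ⟨d, rfl⟩ : ∃ d, n = j + d := ⟨n - j, by omega⟩
    rw [show j + d + 1 - 1 - j = d by omega, show j + d - j = d by omega,
      show 2 * (j + d) - 2 * d = 2 * j by omega, coeff_padeRemainder_two_mul_add_one,
      map_sub, two_mul xCothHalf, map_add, coeff_rescale, coeff_xCothHalf (by omega),
      descFactorial_eq_factorial_mul_choose,
      cast_choose ℚ (show 2 * j ≤ 2 * (j + d) + 1 by omega),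
      show 2 * (j + d) + 1 - 2 * j = 2 * d + 1 by omega]
    simp only [pow_succ, pow_mul]
    push_cast
    field_simp
    ring
  · intro i hi hi'
    rw [mem_range] at hi hi'
    rw [Nat.choose_eq_zero_of_lt (by omega), cast_zero, zero_mul, zero_mul, zero_mul]

theorem bernoulli_identity (n k : ℕ) (hk : 1 ≤ k) (hkn : k ≤ n) :
    ∑ i ∈ Finset.range ((k + 1) / 2),
        (Nat.choose (2 * k - 2 * i - 1) k : ℚ) * (Nat.choose (2 * n + 1) (2 * i + 1))
          * bernoulli (2 * n - 2 * i)
      = (-1 : ℚ) ^ k * 2 ^ (2 * (k : ℤ) - 2 * n - 1) *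
          ∑ i ∈ Finset.range (n - k + 1),
            (Nat.choose (n - i) k : ℚ) * (Nat.choose (2 * n + 1) (2 * i))
              * (2 ^ (2 * i) - 2) * bernoulli (2 * i) := by
  have h := congrArg (coeff (2 * n + 1)) (rescale_two_xCothHalf_mul_reverseBessel_sub k)
  have hpoly :
      coeff (2 * n + 1) (2 * X * (reverseBessel k + evalNegHom (reverseBessel k))) = 0 := by
    rw [mul_comm 2 X, mul_assoc, coeff_succ_X_mul, two_mul (_ : ℚ⟦X⟧), map_add, map_add,
      coeff_evalNegHom, coeff_reverseBessel_of_lt (by omega)]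
    simp
  rw [map_add, hpoly, zero_add, coeff_C_mul, coeff_rescale_two_xCothHalf_mul_reverseBessel_sub hkn,
    coeff_rescale_two_xCothHalf_sub_two_mul_mul_padeRemainder] at h
  have hzpow : (2 : ℚ) ^ (2 * (k : ℤ) - 2 * n - 1) = 2 ^ (2 * k) / 2 ^ (2 * n + 1) := by
    rw [← zpow_natCast, ← zpow_natCast, ← zpow_sub₀ two_ne_zero]
    push_cast
    ring_nf
  rw [hzpow]
  field_simp at h ⊢
  linear_combination h / 4
end

section
/- Fix an integer m ≥ 1 and work with polynomials in x_1,…,x_m over ℚ. In the ring of formal power series in two variables t and s with coefficients in ℚ[x_1,…,x_m], the identity (∏_{i=1}^{m} (1 − t·x_i)) · (1 + Σ_{n ≥ k ≥ 1} N_{n,k} t^n s^k) = ∏_{i=1}^{m} (1 + (s−1)·t·x_i) holds; equivalently, 1 + Σ_{n ≥ k ≥ 1} N_{n,k} t^n s^k = E((s−1)t)·H(t), where E(u) = ∏_{i=1}^m (1+u·x_i) and H(u) = ∏_{i=1}^m (1−u·x_i)^{-1} are the generating series of the elementary and complete homogeneous symmetric polynomials. -/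
open Finset MvPolynomial

/-- `N m n k` is the sum of all monomial symmetric polynomials in `x_1, …, x_m`
indexed by partitions of `n` of length `k`: the sum of all monomials of total
degree `n` having exactly `k` variables with nonzero exponent. -/
noncomputable def N (m n k : ℕ) : MvPolynomial (Fin m) ℚ :=
  ∑ a ∈ (Finset.Nat.antidiagonalTuple m n).filter
      (fun a => (Finset.univ.filter fun i => a i ≠ 0).card = k),
    MvPolynomial.monomial (Finsupp.equivFunOnFinite.symm a) 1

/-- The generating function `1 + ∑_{n ≥ k ≥ 1} N_{n,k} t^n s^k` as a formal power
series in two variables `t = X 0` and `s = X 1` over `ℚ[x_1, …, x_m]`.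
(Note `N m 0 0 = 1` and `N m n k = 0` unless `n ≥ k ≥ 1` or `n = k = 0`.) -/
noncomputable def Fgen (m : ℕ) : MvPowerSeries (Fin 2) (MvPolynomial (Fin m) ℚ) :=
  fun e => N m (e 0) (e 1)

/-!
With `t = X 0` and `s = X 1`, the monomial `x^a` occurs in `Fgen` with weight `t^|a| s^#supp(a)`,
and both exponents are additive over the coordinates of `a`. Hence `Fgen` factors over the
variables as `∏ i, markedGeomSeries x_i`, where
`markedGeomSeries x = ∑_b s^[b ≠ 0] (t x)^b = 1 + s t x / (1 - t x)`,
and each factor satisfies `(1 - t x) · markedGeomSeries x = 1 + (s - 1) t x`.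
-/

noncomputable def markedExp (b : ℕ) : Fin 2 →₀ ℕ :=
  Finsupp.single 0 b + Finsupp.single 1 (if b = 0 then 0 else 1)

@[simp] lemma markedExp_apply_zero (b : ℕ) : markedExp b 0 = b := by simp [markedExp]

@[simp] lemma markedExp_apply_one (b : ℕ) : markedExp b 1 = if b = 0 then 0 else 1 := by
  simp [markedExp]

lemma sum_markedExp_eq_iff {ι : Type*} (s : Finset ι) (a : ι → ℕ) (e : Fin 2 →₀ ℕ) :
    ∑ i ∈ s, markedExp (a i) = e ↔ ∑ i ∈ s, a i = e 0 ∧ #{i ∈ s | a i ≠ 0} = e 1 := by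
  simp [Finsupp.ext_iff, Fin.forall_fin_two, Finsupp.finsetSum_apply, Finset.card_filter]

section MarkedGeom

variable {R : Type*} [CommSemiring R]

noncomputable def markedGeomSeries (x : R) : MvPowerSeries (Fin 2) R :=
  fun e => if e = markedExp (e 0) then x ^ e 0 else 0

lemma coeff_markedGeomSeries (x : R) (e : Fin 2 →₀ ℕ) :
    MvPowerSeries.coeff e (markedGeomSeries x) = if e = markedExp (e 0) then x ^ e 0 else 0 := rfl

lemma coeff_prod_markedGeomSeries {m : ℕ} (x : Fin m → R) (e : Fin 2 →₀ ℕ) :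
    MvPowerSeries.coeff e (∏ i, markedGeomSeries (x i))
      = ∑ a ∈ (Finset.Nat.antidiagonalTuple m (e 0)).filter (fun a => #{i | a i ≠ 0} = e 1),
          ∏ i, x i ^ a i := by
  rw [MvPowerSeries.coeff_prod]
  trans ∑ l ∈ (univ.finsuppAntidiag e).filter (fun l => ∀ i, l i = markedExp (l i 0)),
    ∏ i, x i ^ l i 0
  · rw [Finset.sum_filter]
    simp only [coeff_markedGeomSeries, Fintype.prod_ite_zero]
    congr! -- the two sides carry different `Decidable` instances for the `∀`
  -- surviving index tuples are determined by their `t`-exponents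
  refine Finset.sum_nbij' (fun l i => l i 0)
    (fun a => Finsupp.equivFunOnFinite.symm (fun i => markedExp (a i))) ?_ ?_ ?_ (fun _ _ => by simp)
    (fun _ _ => rfl)
  · intro l hl
    simp only [mem_filter, mem_finsuppAntidiag] at hl
    obtain ⟨⟨hsum, -⟩, hmarked⟩ := hl
    rw [Finset.sum_congr rfl fun i _ => hmarked i, sum_markedExp_eq_iff] at hsum
    simpa [Finset.Nat.mem_antidiagonalTuple] using hsum
  · intro a ha
    simp only [mem_filter, Finset.Nat.mem_antidiagonalTuple] at ha
    simpa [← sum_markedExp_eq_iff] using ha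
  · intro l hl
    ext1 i
    simpa using ((mem_filter.1 hl).2 i).symm

end MarkedGeom

lemma one_sub_X_mul_C_mul_markedGeomSeries {R : Type*} [CommRing R] (x : R) :
    (1 - MvPowerSeries.X 0 * MvPowerSeries.C x) * markedGeomSeries x
      = 1 + (MvPowerSeries.X 1 - 1) * MvPowerSeries.X 0 * MvPowerSeries.C x := by
  have htx : (MvPowerSeries.X 0 * MvPowerSeries.C x : MvPowerSeries (Fin 2) R)
      = MvPowerSeries.monomial (Finsupp.single 0 1) x := by
    rw [MvPowerSeries.X_def, ← MvPowerSeries.monomial_zero_eq_C_apply,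
      MvPowerSeries.monomial_mul_monomial, add_zero, one_mul]
  have hstx : (MvPowerSeries.X 1 * MvPowerSeries.X 0 * MvPowerSeries.C x : MvPowerSeries (Fin 2) R)
      = MvPowerSeries.monomial (Finsupp.single 0 1 + Finsupp.single 1 1) x := by
    rw [mul_assoc, htx, MvPowerSeries.X_def, MvPowerSeries.monomial_mul_monomial, one_mul, add_comm]
  have hrhs : (1 + (MvPowerSeries.X 1 - 1) * MvPowerSeries.X 0 * MvPowerSeries.C x
      : MvPowerSeries (Fin 2) R) = 1 + MvPowerSeries.X 1 * MvPowerSeries.X 0 * MvPowerSeries.C x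
        - MvPowerSeries.X 0 * MvPowerSeries.C x := by ring
  rw [one_sub_mul, hrhs, htx, hstx]
  ext e
  simp only [map_add, map_sub, MvPowerSeries.coeff_monomial_mul, MvPowerSeries.coeff_one,
    MvPowerSeries.coeff_monomial, coeff_markedGeomSeries]
  obtain ⟨n, k, rfl⟩ : ∃ n k, e = Finsupp.single 0 n + Finsupp.single 1 k :=
    ⟨e 0, e 1, by ext i; fin_cases i <;> simp⟩
  rcases n with _ | _ | n <;> rcases k with _ | _ | k <;>
    simp [Finsupp.single_le_iff, Finsupp.ext_iff, Fin.forall_fin_two, pow_succ']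

lemma Fgen_eq_prod_markedGeomSeries (m : ℕ) : Fgen m = ∏ i : Fin m, markedGeomSeries (X i) := by
  refine MvPowerSeries.ext fun e => ?_
  rw [coeff_prod_markedGeomSeries]
  change N m (e 0) (e 1) = _
  refine Finset.sum_congr rfl fun a _ => ?_
  simp [monomial_eq, Finsupp.prod_fintype]

theorem generating_function_eq_general (m : ℕ) :
    (∏ i : Fin m,
        (1 - (MvPowerSeries.X 0 : MvPowerSeries (Fin 2) (MvPolynomial (Fin m) ℚ))
            * MvPowerSeries.C (σ := Fin 2) (R := MvPolynomial (Fin m) ℚ) (MvPolynomial.X i)))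
        * Fgen m
      = ∏ i : Fin m,
          (1 + ((MvPowerSeries.X 1 : MvPowerSeries (Fin 2) (MvPolynomial (Fin m) ℚ)) - 1)
              * MvPowerSeries.X 0
              * MvPowerSeries.C (σ := Fin 2) (R := MvPolynomial (Fin m) ℚ) (MvPolynomial.X i)) := by
  rw [Fgen_eq_prod_markedGeomSeries, ← Finset.prod_mul_distrib]
  exact Finset.prod_congr rfl fun i _ => one_sub_X_mul_C_mul_markedGeomSeries (X i)

theorem generating_function_eq (m : ℕ) (hm : 1 ≤ m) :
    (∏ i : Fin m,
        (1 - (MvPowerSeries.X 0 : MvPowerSeries (Fin 2) (MvPolynomial (Fin m) ℚ))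
            * MvPowerSeries.C (σ := Fin 2) (R := MvPolynomial (Fin m) ℚ) (MvPolynomial.X i)))
        * Fgen m
      = ∏ i : Fin m,
          (1 + ((MvPowerSeries.X 1 : MvPowerSeries (Fin 2) (MvPolynomial (Fin m) ℚ)) - 1)
              * MvPowerSeries.X 0
              * MvPowerSeries.C (σ := Fin 2) (R := MvPolynomial (Fin m) ℚ) (MvPolynomial.X i)) :=
  generating_function_eq_general m
end

section
/- Fix an integer m ≥ 1 and work in ℚ[x_1,…,x_m]. For all integers n, k with 1 ≤ k and n ≥ k+1, the identity p_1·N_{n-1,k} + p_2·N_{n-2,k} + ⋯ + p_{n-k}·N_{k,k} = (n-k)·N_{n,k} + (k+1)·N_{n,k+1} holds, where p_j = x_1^j + ⋯ + x_m^j is the j-th power-sum symmetric polynomial. -/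
/-!
The coefficient of `x^d` on the left counts the pairs `(i, j)` with `1 ≤ j ≤ d i` for which
`x^d / x_i^j` involves exactly `k` variables (the bound `j ≤ n - k` is automatic, since a monomial
in `k` variables has degree at least `k`). Removing `x_i^j` keeps the support of `d` unless
`j = d i`, when it loses `i`. So if `d` has `k` variables the pairs are those with `j < d i`,
and there are `∑ (d i - 1) = n - k` of them; if `d` has `k + 1` variables they are the `k + 1`
pairs `(i, d i)`; otherwise there are none.
-/

open Finset MvPolynomial

namespace Finsupp

variable {σ : Type*}

lemma card_support_le_degree (d : σ →₀ ℕ) : #d.support ≤ d.degree := by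
  rw [degree_apply, card_eq_sum_ones]
  exact Finset.sum_le_sum fun i hi => Nat.one_le_iff_ne_zero.mpr (mem_support_iff.mp hi)

lemma sum_tsub_one_add_card_support [Fintype σ] (d : σ →₀ ℕ) :
    ∑ i, (d i - 1) + #d.support = d.degree := by
  have hzero : ∀ i ∉ d.support, d i - 1 = 0 := fun i hi => by simp [notMem_support_iff.mp hi]
  calc ∑ i, (d i - 1) + #d.support = ∑ i ∈ d.support, (d i - 1 + 1) := by
        rw [← sum_subset (subset_univ _) fun i _ => hzero i, card_eq_sum_ones, sum_add_distrib]
    _ = d.degree := Finset.sum_congr rfl fun i hi =>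
        Nat.sub_add_cancel (Nat.one_le_iff_ne_zero.mpr (mem_support_iff.mp hi))

lemma degree_tsub_single_add {d : σ →₀ ℕ} {i : σ} {j : ℕ} (h : j ≤ d i) :
    (d - single i j).degree + j = d.degree := by
  simpa using congrArg degree (tsub_add_cancel_of_le (single_le_iff.mpr h))

lemma support_tsub_single [DecidableEq σ] {d : σ →₀ ℕ} {i : σ} {j : ℕ} (h : j ≤ d i) :
    (d - single i j).support = if j = d i then d.support.erase i else d.support := by
  ext t
  split_ifs with hj <;> by_cases ht : t = i <;> simp [ht] <;> omega

lemma card_support_tsub_single [DecidableEq σ] {d : σ →₀ ℕ} {i : σ} {j : ℕ} (hj : j ∈ Icc 1 (d i)) :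
    #(d - single i j).support = if j = d i then #d.support - 1 else #d.support := by
  rw [mem_Icc] at hj
  rw [support_tsub_single hj.2]
  split_ifs with h
  · exact card_erase_of_mem (mem_support_iff.mpr (by omega))
  · rfl

lemma filter_Icc_card_support_tsub_single [DecidableEq σ] (d : σ →₀ ℕ) (i : σ) (k : ℕ) :
    {j ∈ Icc 1 (d i) | #(d - single i j).support = k}
      = if #d.support = k then Icc 1 (d i - 1)
        else if #d.support = k + 1 ∧ d i ≠ 0 then {d i} else ∅ := by
  ext j
  by_cases hj : j ∈ Icc 1 (d i)
  · have hcard := card_support_tsub_single hj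
    rw [mem_Icc] at hj
    have hpos : 0 < #d.support := card_pos.mpr ⟨i, mem_support_iff.mpr (by omega)⟩
    split_ifs at hcard ⊢ <;> simp [hcard, hj] <;> omega
  · rw [mem_Icc] at hj
    split_ifs <;> simp [hj] <;> omega

lemma sum_card_filter_Icc_card_support_tsub_single [Fintype σ] [DecidableEq σ] (d : σ →₀ ℕ)
    (k : ℕ) :
    ∑ i, #{j ∈ Icc 1 (d i) | #(d - single i j).support = k}
      = if #d.support = k then d.degree - k else if #d.support = k + 1 then k + 1 else 0 := by
  simp_rw [filter_Icc_card_support_tsub_single]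
  split_ifs with hk hk'
  · have := sum_tsub_one_add_card_support d
    simp only [Nat.card_Icc, Nat.add_sub_cancel]
    omega
  · rw [← hk', card_eq_sum_ones, ← sum_subset (subset_univ _)]
    · exact Finset.sum_congr rfl fun i hi => by simp [mem_support_iff.mp hi]
    · intro i _ hi
      simp [notMem_support_iff.mp hi]
  · simp [hk']

end Finsupp

lemma MvPolynomial.coeff_psum_mul {σ R : Type*} [CommSemiring R] [Fintype σ] (j : ℕ)
    (p : MvPolynomial σ R) (d : σ →₀ ℕ) :
    coeff d (psum σ R j * p) = ∑ i, if j ≤ d i then coeff (d - Finsupp.single i j) p else 0 := by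
  simp [psum, sum_mul, coeff_sum, X_pow_eq_monomial, coeff_monomial_mul', Finsupp.single_le_iff]

lemma coeff_N (m n k : ℕ) (d : Fin m →₀ ℕ) :
    coeff d (N m n k) = if d.degree = n ∧ #d.support = k then 1 else 0 := by
  have hsupp : (univ.filter fun i => ¬d i = 0) = d.support := by ext; simp
  simp [N, coeff_sum, coeff_monomial, Equiv.symm_apply_eq, Finsupp.degree_eq_sum, hsupp, and_comm,
    Finset.Nat.mem_antidiagonalTuple]

lemma coeff_sum_Icc_psum_mul_N (m n k : ℕ) (d : Fin m →₀ ℕ) :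
    coeff d (∑ j ∈ Icc 1 (n - k), psum (Fin m) ℚ j * N m (n - j) k)
      = if d.degree = n then
          ((∑ i, #{j ∈ Icc 1 (d i) | #(d - Finsupp.single i j).support = k} : ℕ) : ℚ) else 0 := by
  simp_rw [coeff_sum, coeff_psum_mul, coeff_N, ← ite_and]
  rw [sum_comm]
  split_ifs with hd
  · push_cast
    refine sum_congr rfl fun i _ => ?_
    rw [sum_boole]
    congr 2
    ext j
    simp only [mem_filter, mem_Icc]
    constructor
    · rintro ⟨⟨hj, -⟩, hle, -, hk⟩
      exact ⟨⟨hj, hle⟩, hk⟩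
    · rintro ⟨⟨hj, hle⟩, hk⟩
      have := Finsupp.degree_tsub_single_add hle
      have := (d - Finsupp.single i j).card_support_le_degree
      omega
  · refine sum_eq_zero fun i _ => sum_eq_zero fun j hj => if_neg ?_
    rintro ⟨hle, hdeg, -⟩
    have := Finsupp.degree_tsub_single_add hle
    have := mem_Icc.mp hj
    omega

theorem N_recurrence_general (m : ℕ) (n k : ℕ) :
    ∑ j ∈ Finset.Icc 1 (n - k), MvPolynomial.psum (Fin m) ℚ j * N m (n - j) k
      = MvPolynomial.C ((n : ℚ) - k) * N m n k
        + MvPolynomial.C ((k : ℚ) + 1) * N m n (k + 1) := by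
  ext d
  rw [coeff_sum_Icc_psum_mul_N, Finsupp.sum_card_filter_Icc_card_support_tsub_single, coeff_add,
    coeff_C_mul, coeff_C_mul, coeff_N, coeff_N]
  by_cases hd : d.degree = n
  · subst hd
    by_cases hk : #d.support = k
    · simp [hk, Nat.cast_sub (hk ▸ d.card_support_le_degree)]
    · by_cases hk' : #d.support = k + 1 <;> simp [hk, hk']
  · simp [hd]

theorem N_recurrence (m : ℕ) (hm : 1 ≤ m) (n k : ℕ) (hk : 1 ≤ k) (hn : k + 1 ≤ n) :
    ∑ j ∈ Finset.Icc 1 (n - k), MvPolynomial.psum (Fin m) ℚ j * N m (n - j) k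
      = MvPolynomial.C ((n : ℚ) - k) * N m n k
        + MvPolynomial.C ((k : ℚ) + 1) * N m n (k + 1) :=
  N_recurrence_general m n k
end

section
/- For every integer n ≥ 2, E(2n,2) = (3/4)·ζ(2n); that is, the sum of all double zeta values ζ(2a,2b) with a,b ≥ 1 and a+b = n equals three quarters of ζ(2n). -/
open Finset Real

/-- The multiple zeta value `ζ(a 0, a 1, …, a (k-1)) = ∑_{n_1 > n_2 > ⋯ > n_k ≥ 1} ∏ 1/n_i^{a i}`. -/
noncomputable def mzv {k : ℕ} (a : Fin k → ℕ) : ℝ :=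
  ∑' n : {f : Fin k → ℕ // StrictAnti f ∧ ∀ i, 0 < f i},
    ∏ i, 1 / ((n.1 i : ℝ) ^ (a i))

/-- `E n k` is the sum of all multiple zeta values of even arguments with weight `2n`
and depth `k`, i.e. the paper's `E(2n, k)`. -/
noncomputable def E (n k : ℕ) : ℝ :=
  ∑ a ∈ (Finset.Nat.antidiagonalTuple k n).filter (fun a => ∀ i, 0 < a i),
    mzv (fun i => 2 * a i)

/-- The Riemann zeta function at a natural number argument `s ≥ 2`. -/
noncomputable def rzeta (s : ℕ) : ℝ := ∑' m : ℕ, 1 / ((m : ℝ) + 1) ^ s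

/-!
For `0 < k < m` the depth-two summands of weight `2(n+1)` form a finite geometric sum,
`∑_{a+b=n+1, a,b ≥ 1} m^{-2a} k^{-2b} = (k^{-2n} - m^{-2n}) / (m² - k²)`, so `E(2n+2, 2)` is the
difference of the two absolutely convergent double series `∑_{k<m} k^{-2n}/(m² - k²)` and
`∑_{k<m} m^{-2n}/(m² - k²)`. Exchanging the names of `k` and `m` in the second one merges them
into `∑_k k^{-2n} ∑_{m ≥ 1, m ≠ k} 1/(m² - k²)`. By partial fractions
`1/(m² - k²) = (1/(m - k) - 1/(m + k))/(2k)`, the inner sum telescopes to harmonic numbers and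
equals `3/(4k²)`.
-/

open Filter Topology

theorem hasSum_sub_add_of_antitone {f : ℕ → ℝ} (hf : Antitone f)
    (hlim : Tendsto f atTop (𝓝 0)) (c : ℕ) :
    HasSum (fun n ↦ f n - f (n + c)) (∑ i ∈ range c, f i) := by
  have hpartial (N : ℕ) : ∑ n ∈ range N, (f n - f (n + c)) =
      ∑ i ∈ range c, f i - ∑ i ∈ range c, f (N + i) := by
    have h₁ := sum_range_add f N c
    have h₂ := sum_range_add f c N
    rw [add_comm c N] at h₂
    simp only [sum_sub_distrib, add_comm _ c]
    linarith
  -- The terms are nonnegative, so convergence of the partial sums suffices.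
  rw [hasSum_iff_tendsto_nat_of_nonneg fun n ↦ sub_nonneg.2 (hf (Nat.le_add_right n c))]
  simp only [hpartial]
  have htail : Tendsto (fun N ↦ ∑ i ∈ range c, f (N + i)) atTop (𝓝 0) := by
    simpa using tendsto_finsetSum (range c)
      fun i _ ↦ hlim.comp (tendsto_add_atTop_nat i)
  simpa using tendsto_const_nhds.sub htail

theorem harmonic_cast_eq_sum (c : ℕ) : (harmonic c : ℝ) = ∑ i ∈ range c, 1 / ((i : ℝ) + 1) := by
  simp [harmonic]

theorem harmonic_le_self (c : ℕ) : harmonic c ≤ c := by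
  calc harmonic c ≤ ∑ _i ∈ range c, (1 : ℚ) :=
        sum_le_sum fun i _ ↦ inv_le_one_of_one_le₀ (by simp)
    _ = c := by simp

theorem hasSum_one_div_mul_add (c : ℕ) (hc : c ≠ 0) :
    HasSum (fun d : ℕ ↦ 1 / (((d : ℝ) + 1) * ((d : ℝ) + 1 + c))) (harmonic c / c) := by
  have hf : Antitone fun d : ℕ ↦ 1 / ((d : ℝ) + 1) := fun a b hab ↦
    one_div_le_one_div_of_le (by positivity) (by gcongr)
  have hlim : Tendsto (fun d : ℕ ↦ 1 / ((d : ℝ) + 1)) atTop (𝓝 0) :=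
    tendsto_one_div_add_atTop_nhds_zero_nat
  rw [harmonic_cast_eq_sum]
  refine ((hasSum_sub_add_of_antitone hf hlim c).div_const (c : ℝ)).congr_fun fun d ↦ ?_
  field_simp
  push_cast
  ring

theorem sum_Ioo_one_div_sq_sub_sq (k : ℕ) (hk : k ≠ 0) :
    ∑ m ∈ Ioo 0 k, 1 / ((m : ℝ) ^ 2 - (k : ℝ) ^ 2) =
      (3 / (2 * k) - (harmonic (2 * k) : ℝ)) / (2 * k) := by
  obtain ⟨j, rfl⟩ := Nat.exists_eq_add_one_of_ne_zero hk
  have hreflect : ∑ t ∈ range j, 1 / ((j : ℝ) - t) = harmonic j := by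
    rw [harmonic_cast_eq_sum, ← sum_range_reflect]
    refine sum_congr rfl fun t ht ↦ ?_
    rw [mem_range] at ht
    rw [Nat.cast_sub (by omega), Nat.cast_sub (by omega)]
    push_cast
    ring_nf
  have hshift : ∑ t ∈ range j, 1 / ((j : ℝ) + t + 2) =
      harmonic (2 * j + 1) - harmonic (j + 1) := by
    rw [harmonic_cast_eq_sum, harmonic_cast_eq_sum, show 2 * j + 1 = (j + 1) + j by ring,
      sum_range_add]
    push_cast
    ring_nf
  have hpartial (t : ℕ) (ht : t ∈ range j) :
      1 / (((1 + t : ℕ) : ℝ) ^ 2 - ((j + 1 : ℕ) : ℝ) ^ 2) =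
        -(1 / ((j : ℝ) - t) + 1 / ((j : ℝ) + t + 2)) / (2 * ((j + 1 : ℕ) : ℝ)) := by
    have : (t : ℝ) < j := by rw [mem_range] at ht; exact_mod_cast ht
    have : (j : ℝ) - t ≠ 0 := by linarith
    rw [show ((1 + t : ℕ) : ℝ) ^ 2 - ((j + 1 : ℕ) : ℝ) ^ 2 = -(((j : ℝ) - t) * (j + t + 2)) by
      push_cast; ring]
    field_simp
    push_cast
    ring
  rw [← Ico_add_one_left_eq_Ioo, sum_Ico_eq_sum_range, zero_add, Nat.add_sub_cancel,
    sum_congr rfl hpartial, ← sum_div, sum_neg_distrib, sum_add_distrib, hreflect, hshift]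
  push_cast [harmonic_succ, show 2 * (j + 1) = 2 * j + 1 + 1 by ring]
  field_simp
  ring

theorem hasSum_one_div_sq_sub_sq_of_lt (k : ℕ) (hk : k ≠ 0) :
    HasSum (fun m : ℕ ↦ if k < m then 1 / ((m : ℝ) ^ 2 - (k : ℝ) ^ 2) else 0)
      ((harmonic (2 * k) : ℝ) / (2 * k)) := by
  rw [← hasSum_nat_add_iff' (k + 1), sum_eq_zero fun i hi ↦ if_neg (by simp at hi; omega),
    sub_zero]
  have h := hasSum_one_div_mul_add (2 * k) (by omega)
  push_cast at h
  refine h.congr_fun fun d ↦ ?_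
  rw [if_pos (by omega)]
  push_cast
  ring_nf

theorem hasSum_one_div_sq_sub_sq_of_ne (k : ℕ) (hk : k ≠ 0) :
    HasSum (fun m : ℕ ↦ if 0 < m ∧ m ≠ k then 1 / ((m : ℝ) ^ 2 - (k : ℝ) ^ 2) else 0)
      (3 / (4 * (k : ℝ) ^ 2)) := by
  have hhead : HasSum (fun m : ℕ ↦ if m ∈ Ioo 0 k then 1 / ((m : ℝ) ^ 2 - (k : ℝ) ^ 2) else 0)
      ((3 / (2 * k) - (harmonic (2 * k) : ℝ)) / (2 * k)) := by
    rw [← sum_Ioo_one_div_sq_sub_sq k hk]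
    have h : HasSum _ _ := hasSum_sum_of_ne_finset_zero (s := Ioo 0 k)
      (f := fun m : ℕ ↦ if m ∈ Ioo 0 k then 1 / ((m : ℝ) ^ 2 - (k : ℝ) ^ 2) else 0)
      fun m hm ↦ if_neg hm
    rwa [sum_ite_mem, inter_self] at h
  have hsum : (3 / (2 * k) - (harmonic (2 * k) : ℝ)) / (2 * k) + (harmonic (2 * k) : ℝ) / (2 * k)
      = 3 / (4 * (k : ℝ) ^ 2) := by
    field_simp
    ring
  rw [← hsum]
  refine (hhead.add (hasSum_one_div_sq_sub_sq_of_lt k hk)).congr_fun fun m ↦ ?_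
  simp only [mem_Ioo]
  split_ifs <;> first | omega | simp

theorem sum_Ioo_pow_mul_pow_mul_sub {R : Type*} [CommRing R] (x y : R) (n : ℕ) :
    (∑ i ∈ Ioo 0 (n + 1), x ^ i * y ^ (n + 1 - i)) * (x - y) = x * y * (x ^ n - y ^ n) := by
  rw [← Ico_add_one_left_eq_Ioo, sum_Ico_eq_sum_range, zero_add, Nat.add_sub_cancel,
    ← (Commute.all x y).geom_sum₂_mul, ← mul_assoc, mul_sum]
  congr 1
  refine sum_congr rfl fun t ht ↦ ?_
  rw [show n + 1 - (1 + t) = n - 1 - t + 1 by simp at ht; omega]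
  ring

theorem sum_Ioo_one_div_pow_mul_pow {K : Type*} [Field K] {a b : K} (ha : a ≠ 0) (hb : b ≠ 0)
    (hab : a ≠ b) (n : ℕ) :
    ∑ i ∈ Ioo 0 (n + 1), 1 / (a ^ i * b ^ (n + 1 - i)) = (1 / b ^ n - 1 / a ^ n) / (a - b) := by
  have hsub : a⁻¹ - b⁻¹ ≠ 0 := sub_ne_zero.2 (inv_injective.ne hab)
  simp only [one_div, mul_inv, ← inv_pow]
  apply mul_right_cancel₀ hsub
  rw [sum_Ioo_pow_mul_pow_mul_sub]
  have : a - b ≠ 0 := sub_ne_zero.2 hab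
  field_simp
  ring

theorem sum_filter_antidiagonalTuple_two {M : Type*} [AddCommMonoid M] (n : ℕ) (f : ℕ → ℕ → M) :
    ∑ a ∈ (Nat.antidiagonalTuple 2 n).filter (fun a ↦ ∀ i, 0 < a i), f (a 0) (a 1) =
      ∑ i ∈ Ioo 0 n, f i (n - i) := by
  refine sum_nbij' (fun a ↦ a 0) (fun i ↦ ![i, n - i]) ?_ ?_ ?_ ?_ ?_ <;>
    simp only [mem_filter, Nat.mem_antidiagonalTuple, Fin.sum_univ_two, Fin.forall_fin_two,
      mem_Ioo, Matrix.cons_val_zero, Matrix.cons_val_one]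
  · omega
  · omega
  · intro a ha
    ext i
    fin_cases i
    · rfl
    · simp only [Fin.mk_one, Matrix.cons_val_one, Matrix.cons_val_zero]
      omega
  · simp
  · intro a ha
    rw [show a 1 = n - a 0 by omega]

def orderedPairs : Set (ℕ × ℕ) := {p | 0 < p.1 ∧ p.1 < p.2}

noncomputable def lowerTerm (s : ℕ) : ℕ × ℕ → ℝ :=
  orderedPairs.indicator fun p ↦ 1 / ((p.1 : ℝ) ^ s * ((p.2 : ℝ) ^ 2 - (p.1 : ℝ) ^ 2))

noncomputable def upperTerm (s : ℕ) : ℕ × ℕ → ℝ :=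
  orderedPairs.indicator fun p ↦ 1 / ((p.2 : ℝ) ^ s * ((p.2 : ℝ) ^ 2 - (p.1 : ℝ) ^ 2))

theorem sq_sub_sq_pos_of_mem_orderedPairs {p : ℕ × ℕ} (hp : p ∈ orderedPairs) :
    0 < (p.2 : ℝ) ^ 2 - (p.1 : ℝ) ^ 2 := by
  have : (p.1 : ℝ) < p.2 := by exact_mod_cast hp.2
  nlinarith [(Nat.cast_nonneg p.1 : (0 : ℝ) ≤ p.1)]

theorem lowerTerm_nonneg (s : ℕ) : 0 ≤ lowerTerm s := fun p ↦
  Set.indicator_nonneg (fun p hp ↦ by have := sq_sub_sq_pos_of_mem_orderedPairs hp; positivity) p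

theorem upperTerm_nonneg (s : ℕ) : 0 ≤ upperTerm s := fun p ↦
  Set.indicator_nonneg (fun p hp ↦ by have := sq_sub_sq_pos_of_mem_orderedPairs hp; positivity) p

theorem upperTerm_le_lowerTerm (s : ℕ) : upperTerm s ≤ lowerTerm s := fun p ↦ by
  by_cases hp : p ∈ orderedPairs
  · have hd := sq_sub_sq_pos_of_mem_orderedPairs hp
    have hk : (0 : ℝ) < p.1 := by exact_mod_cast hp.1
    have hkm : (p.1 : ℝ) ≤ p.2 := by exact_mod_cast hp.2.le
    rw [upperTerm, lowerTerm, Set.indicator_of_mem hp, Set.indicator_of_mem hp]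
    gcongr
  · simp [upperTerm, lowerTerm, hp]

theorem hasSum_lowerTerm_row (s : ℕ) {k : ℕ} (hk : k ≠ 0) :
    HasSum (fun m ↦ lowerTerm s (k, m)) (1 / (k : ℝ) ^ s * ((harmonic (2 * k) : ℝ) / (2 * k))) := by
  refine ((hasSum_one_div_sq_sub_sq_of_lt k hk).mul_left (1 / (k : ℝ) ^ s)).congr_fun fun m ↦ ?_
  simp only [lowerTerm, orderedPairs, Set.indicator, Set.mem_ofPred_eq, Nat.pos_of_ne_zero hk,
    true_and, mul_ite, mul_zero, one_div_mul_one_div]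

theorem summable_lowerTerm {s : ℕ} (hs : 1 < s) : Summable (lowerTerm s) := by
  refine (summable_prod_of_nonneg (lowerTerm_nonneg s)).2 ⟨fun k ↦ ?_, ?_⟩
  · rcases eq_or_ne k 0 with rfl | hk
    · simp [lowerTerm, orderedPairs]
    · exact (hasSum_lowerTerm_row s hk).summable
  · refine (Real.summable_one_div_nat_pow.2 hs).of_nonneg_of_le
      (fun k ↦ tsum_nonneg fun m ↦ lowerTerm_nonneg s _) fun k ↦ ?_
    rcases eq_or_ne k 0 with rfl | hk
    · simp [lowerTerm, orderedPairs]
    · rw [(hasSum_lowerTerm_row s hk).tsum_eq]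
      refine mul_le_of_le_one_right (by positivity) ((div_le_one (by positivity)).2 ?_)
      exact_mod_cast harmonic_le_self (2 * k)

theorem summable_upperTerm {s : ℕ} (hs : 1 < s) : Summable (upperTerm s) :=
  (summable_lowerTerm hs).of_nonneg_of_le (upperTerm_nonneg s) (upperTerm_le_lowerTerm s)

-- At `k = 0` both sides vanish, the right-hand one because `1 / 0 ^ s = 0` in `ℝ`.
theorem lowerTerm_sub_upperTerm_swap {s : ℕ} (hs : s ≠ 0) (k m : ℕ) :
    lowerTerm s (k, m) - upperTerm s (m, k) =
      1 / (k : ℝ) ^ s * (if 0 < m ∧ m ≠ k then 1 / ((m : ℝ) ^ 2 - (k : ℝ) ^ 2) else 0) := by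
  rcases eq_or_ne k 0 with rfl | hk
  · simp [lowerTerm, upperTerm, orderedPairs, hs]
  rcases lt_trichotomy k m with hkm | rfl | hmk
  · simp [lowerTerm, upperTerm, orderedPairs, Nat.pos_of_ne_zero hk, hkm, hkm.ne', hkm.not_gt,
      Nat.pos_of_ne_zero hk |>.trans hkm, mul_comm]
  · simp [lowerTerm, upperTerm, orderedPairs]
  · rcases Nat.eq_zero_or_pos m with rfl | hm
    · simp [lowerTerm, upperTerm, orderedPairs]
    · simp [lowerTerm, upperTerm, orderedPairs, hm, hmk, hmk.ne, hmk.not_gt, mul_comm]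
      rw [← neg_sub ((m : ℝ) ^ 2), inv_neg, mul_neg, neg_neg]

theorem tsum_lowerTerm_sub_tsum_upperTerm {s : ℕ} (hs : 1 < s) :
    ∑' p, lowerTerm s p - ∑' p, upperTerm s p = 3 / 4 * ∑' k : ℕ, 1 / (k : ℝ) ^ (s + 2) := by
  have hrow (k : ℕ) : HasSum (fun m ↦ lowerTerm s (k, m) - upperTerm s (m, k))
      (3 / 4 * (1 / (k : ℝ) ^ (s + 2))) := by
    simp_rw [lowerTerm_sub_upperTerm_swap (by omega : s ≠ 0)]
    rcases eq_or_ne k 0 with rfl | hk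
    · simp [show s ≠ 0 by omega]
    · rw [show 3 / 4 * (1 / (k : ℝ) ^ (s + 2)) = 1 / (k : ℝ) ^ s * (3 / (4 * (k : ℝ) ^ 2)) by
        field_simp; ring]
      exact (hasSum_one_div_sq_sub_sq_of_ne k hk).mul_left _
  have hswap := (summable_upperTerm hs).prod_symm
  have htsum_swap : ∑' p, upperTerm s p = ∑' p : ℕ × ℕ, upperTerm s p.swap :=
    ((Equiv.prodComm ℕ ℕ).tsum_eq _).symm
  rw [htsum_swap, ← (summable_lowerTerm hs).tsum_sub hswap,
    (summable_lowerTerm hs).sub hswap |>.tsum_prod' fun k ↦ (hrow k).summable, ← tsum_mul_left]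
  exact tsum_congr fun k ↦ (hrow k).tsum_eq

-- The `k = 0` term on the left is `1 / 0 = 0`.
theorem tsum_one_div_nat_pow_eq_rzeta {s : ℕ} (hs : 1 < s) :
    ∑' k : ℕ, 1 / (k : ℝ) ^ s = rzeta s := by
  rw [(Real.summable_one_div_nat_pow.2 hs).tsum_eq_zero_add, rzeta]
  simp [show s ≠ 0 by omega]

def finTwoStrictAntiPosEquiv : {f : Fin 2 → ℕ // StrictAnti f ∧ ∀ i, 0 < f i} ≃ orderedPairs where
  toFun f := ⟨(f.1 1, f.1 0), f.2.2 1, f.2.1 Fin.zero_lt_one⟩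
  invFun p := ⟨![p.1.2, p.1.1], by
    obtain ⟨⟨k, m⟩, hk, hkm⟩ := p
    simp [strictAnti_vecCons, Fin.forall_fin_two, hk, hkm, hk.trans hkm]⟩
  left_inv f := by
    ext i
    fin_cases i <;> rfl
  right_inv p := rfl

noncomputable def mzvTwoTerm (a : Fin 2 → ℕ) : ℕ × ℕ → ℝ :=
  orderedPairs.indicator fun p ↦ 1 / ((p.2 : ℝ) ^ a 0 * (p.1 : ℝ) ^ a 1)

theorem mzvTwoTerm_nonneg (a : Fin 2 → ℕ) : 0 ≤ mzvTwoTerm a :=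
  fun p ↦ Set.indicator_nonneg (fun p _ ↦ by positivity) p

theorem mzv_fin_two (a : Fin 2 → ℕ) : mzv a = ∑' p, mzvTwoTerm a p := by
  rw [mzv, mzvTwoTerm, ← _root_.tsum_subtype, ← finTwoStrictAntiPosEquiv.tsum_eq]
  refine tsum_congr fun f ↦ ?_
  rw [Fin.prod_univ_two, one_div_mul_one_div]
  rfl

theorem sum_mzvTwoTerm (n : ℕ) (p : ℕ × ℕ) :
    ∑ a ∈ (Nat.antidiagonalTuple 2 (n + 1)).filter (fun a ↦ ∀ i, 0 < a i),
      mzvTwoTerm (fun i ↦ 2 * a i) p = lowerTerm (2 * n) p - upperTerm (2 * n) p := by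
  by_cases hp : p ∈ orderedPairs
  · have hd := sq_sub_sq_pos_of_mem_orderedPairs hp
    have hk : (0 : ℝ) < p.1 := by exact_mod_cast hp.1
    have hm : (0 : ℝ) < p.2 := by exact_mod_cast hp.1.trans hp.2
    simp only [mzvTwoTerm, lowerTerm, upperTerm, Set.indicator_of_mem hp]
    rw [sum_filter_antidiagonalTuple_two (n + 1)
      fun i j ↦ 1 / ((p.2 : ℝ) ^ (2 * i) * (p.1 : ℝ) ^ (2 * j))]
    simp only [pow_mul]
    rw [sum_Ioo_one_div_pow_mul_pow (by positivity) (by positivity) (by linarith)]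
    field_simp
  · simp [mzvTwoTerm, lowerTerm, upperTerm, hp]

theorem E_succ_two_eq_tsum {n : ℕ} (hn : n ≠ 0) :
    E (n + 1) 2 = ∑' p, (lowerTerm (2 * n) p - upperTerm (2 * n) p) := by
  have hsummable (a : Fin 2 → ℕ)
      (ha : a ∈ (Nat.antidiagonalTuple 2 (n + 1)).filter (fun a ↦ ∀ i, 0 < a i)) :
      Summable (mzvTwoTerm fun i ↦ 2 * a i) := by
    refine (summable_lowerTerm (by omega : 1 < 2 * n)).of_nonneg_of_le (mzvTwoTerm_nonneg _)
      fun p ↦ ?_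
    calc mzvTwoTerm (fun i ↦ 2 * a i) p
        ≤ ∑ a ∈ (Nat.antidiagonalTuple 2 (n + 1)).filter (fun a ↦ ∀ i, 0 < a i),
            mzvTwoTerm (fun i ↦ 2 * a i) p :=
          single_le_sum (f := fun a ↦ mzvTwoTerm (fun i ↦ 2 * a i) p)
            (fun a _ ↦ mzvTwoTerm_nonneg _ p) ha
      _ = lowerTerm (2 * n) p - upperTerm (2 * n) p := sum_mzvTwoTerm n p
      _ ≤ lowerTerm (2 * n) p := sub_le_self _ (upperTerm_nonneg _ p)
  rw [E, sum_congr rfl fun a _ ↦ mzv_fin_two _, ← Summable.tsum_finsetSum hsummable]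
  exact tsum_congr (sum_mzvTwoTerm n)

theorem E_two (n : ℕ) (hn : 2 ≤ n) :
    E n 2 = 3 / 4 * rzeta (2 * n) := by
  obtain ⟨n, rfl⟩ : ∃ m, n = m + 1 := ⟨n - 1, by omega⟩
  have hs : 1 < 2 * n := by omega
  rw [E_succ_two_eq_tsum (by omega), (summable_lowerTerm hs).tsum_sub (summable_upperTerm hs),
    tsum_lowerTerm_sub_tsum_upperTerm hs, tsum_one_div_nat_pow_eq_rzeta (by omega), mul_add_one]
end
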